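/- On the hyperbolic upper half-space, for any smooth functions A,B:(0,∞)→ℝ, the vector field u(x,y,z) = (A(z), B(z), 0) is a steady solution of the Euler equations: it satisfies Σⱼ u^j ∂ⱼu^k + Σ_{i,j} Γ^k_{ij} u^i u^j = −Σ_l g^{kl} ∂_l π for k=1,2,3, with pressure π(x,y,z) = −∫₁^z (A(t)²+B(t)²) t^{−3} dt, and it is divergence-free with respect to the hyperbolic volume: Σᵢ ∂ᵢ(z^{−3} u^i) = 0. -/

import Mathlib

open RealInnerProductSpace

noncomputable section

/-- ℝ³; the hyperbolic upper half-space is the set of points with `p 2 > 0`. -/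
abbrev E3 := EuclideanSpace ℝ (Fin 3)

/-- Partial derivative `∂ᵢ f` at `p`. -/
def pd3 (f : E3 → ℝ) (i : Fin 3) (p : E3) : ℝ :=
  fderiv ℝ f p (EuclideanSpace.single i 1)

/-- The hyperbolic metric `g_{ij}(x,y,z) = z⁻² δ_{ij}` of the half-space model. -/
def gdown (p : E3) (i j : Fin 3) : ℝ := (p 2)⁻¹ ^ 2 * (if i = j then 1 else 0)

/-- The inverse metric `g^{ij} = z² δ_{ij}`. -/
def gup (p : E3) (i j : Fin 3) : ℝ := (p 2) ^ 2 * (if i = j then 1 else 0)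

/-- The Christoffel symbols `Γ^k_{ij} = ½ Σ_l g^{kl}(∂ᵢg_{jl} + ∂ⱼg_{il} − ∂_l g_{ij})`. -/
def Γh (p : E3) (k i j : Fin 3) : ℝ :=
  (1/2) * ∑ l : Fin 3, gup p k l *
    (pd3 (fun q => gdown q j l) i p + pd3 (fun q => gdown q i l) j p
      - pd3 (fun q => gdown q i j) l p)

/-- The field `u(x,y,z) = (A(z), B(z), 0)`. -/
def uh (A B : ℝ → ℝ) (p : E3) : E3 := WithLp.toLp 2 ![A (p 2), B (p 2), 0]

/-- The pressure `π(x,y,z) = −∫₁^z (A(t)² + B(t)²) t⁻³ dt`. -/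
def prh (A B : ℝ → ℝ) (p : E3) : ℝ :=
  - ∫ t in (1:ℝ)..(p 2), (A t ^ 2 + B t ^ 2) / t ^ 3

lemma pd3_comp (f : ℝ → ℝ) (p : E3) (i : Fin 3) (hf : DifferentiableAt ℝ f (p 2)) :
    pd3 (fun q : E3 => f (q 2)) i p = deriv f (p 2) * (if i = 2 then 1 else 0) := by
  have hproj : HasFDerivAt (fun q : E3 => q 2) (EuclideanSpace.proj (𝕜 := ℝ) (2 : Fin 3)) p :=
    (EuclideanSpace.proj (𝕜 := ℝ) (2 : Fin 3)).hasFDerivAt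
  have h := hf.hasDerivAt.comp_hasFDerivAt p hproj
  have h2 : HasFDerivAt (fun q : E3 => f (q 2))
      (deriv f (p 2) • EuclideanSpace.proj (𝕜 := ℝ) (2 : Fin 3)) p := h
  rw [pd3, h2.fderiv]
  simp [EuclideanSpace.single_apply]
  rcases eq_or_ne i 2 with h3 | h3 <;> simp [h3, eq_comm]

lemma pd3_const (c : ℝ) (i : Fin 3) (p : E3) : pd3 (fun _ => c) i p = 0 := by
  simp [pd3]

lemma pd3_gdown (p : E3) (hp : p 2 ≠ 0) (i j l : Fin 3) :
    pd3 (fun q => gdown q j l) i p =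
      (if j = l then 1 else 0) * ((if i = 2 then 1 else 0) * (-2 * (p 2)⁻¹ ^ 3)) := by
  have hd : HasDerivAt (fun z : ℝ => z⁻¹ ^ 2 * (if j = l then (1:ℝ) else 0))
      ((2 * (p 2)⁻¹ ^ 1 * -((p 2) ^ 2)⁻¹) * (if j = l then 1 else 0)) (p 2) :=
    ((hasDerivAt_inv hp).pow 2).mul_const _
  have e : (fun q : E3 => gdown q j l)
      = fun q => (fun z : ℝ => z⁻¹ ^ 2 * (if j = l then (1:ℝ) else 0)) (q 2) := rfl
  rw [e, pd3_comp _ _ _ hd.differentiableAt, hd.deriv]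
  rcases eq_or_ne j l with h | h <;> rcases eq_or_ne i 2 with h' | h' <;>
    simp [h, h'] <;> field_simp <;> ring

lemma Γh_closed (p : E3) (hp : p 2 ≠ 0) (k i j : Fin 3) :
    Γh p k i j = -(p 2)⁻¹ * ((if i = 2 then 1 else 0) * (if j = k then 1 else 0)
      + (if j = 2 then 1 else 0) * (if i = k then 1 else 0)
      - (if i = j then 1 else 0) * (if k = 2 then 1 else 0)) := by
  unfold Γh gup
  rw [Fin.sum_univ_three]
  simp only [pd3_gdown p hp]
  fin_cases k <;> fin_cases i <;> fin_cases j <;> simp <;> field_simp <;> ring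

/-- on hyperbolic half-space, `u = (A(z), B(z), 0)` solves the steady Euler
equations with pressure `π(z) = −∫₁^z (A²+B²)t⁻³ dt`, and is divergence-free w.r.t. the
hyperbolic volume `z⁻³`. -/
theorem statement3 (A B : ℝ → ℝ) (hA : ContDiff ℝ (⊤ : ℕ∞) A) (hB : ContDiff ℝ (⊤ : ℕ∞) B) :
    ∀ p : E3, 0 < p 2 →
      (∀ k : Fin 3,
        (∑ j : Fin 3, uh A B p j * pd3 (fun q => uh A B q k) j p)
            + (∑ i : Fin 3, ∑ j : Fin 3, Γh p k i j * uh A B p i * uh A B p j)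
          = - ∑ l : Fin 3, gup p k l * pd3 (prh A B) l p) ∧
      (∑ i : Fin 3, pd3 (fun q => (q 2)⁻¹ ^ 3 * uh A B q i) i p) = 0 := by
  intro p hp
  have hp' : p 2 ≠ 0 := ne_of_gt hp
  have hA' : DifferentiableAt ℝ A (p 2) := (hA.differentiable (by simp)).differentiableAt
  have hB' : DifferentiableAt ℝ B (p 2) := (hB.differentiable (by simp)).differentiableAt
  have eA : (fun q : E3 => uh A B q 0) = fun q => A (q 2) := by funext q; simp [uh]
  have eB : (fun q : E3 => uh A B q 1) = fun q => B (q 2) := by funext q; simp [uh]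
  have eC : (fun q : E3 => uh A B q 2) = fun _ => (0:ℝ) := by funext q; simp [uh]
  -- pressure derivative
  set g : ℝ → ℝ := fun t => (A t ^ 2 + B t ^ 2) / t ^ 3 with hg
  have hgIoi : ContinuousOn g (Set.Ioi (0:ℝ)) := by
    intro t ht
    exact (((hA.continuous.pow 2).add (hB.continuous.pow 2)).continuousAt.div
      (continuousAt_pow _ _) (pow_ne_zero 3 (ne_of_gt ht))).continuousWithinAt
  have hsub : Set.uIcc (1:ℝ) (p 2) ⊆ Set.Ioi 0 := by
    intro t ht
    rcases Set.mem_uIcc.mp ht with ⟨h1, _⟩ | ⟨h1, _⟩ <;> simp only [Set.mem_Ioi] <;> linarith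
  have hint : IntervalIntegrable g MeasureTheory.volume 1 (p 2) :=
    (hgIoi.mono hsub).intervalIntegrable
  have hmeas : StronglyMeasurableAtFilter g (nhds (p 2)) :=
    hgIoi.stronglyMeasurableAtFilter isOpen_Ioi (p 2) hp
  have hcont : ContinuousAt g (p 2) :=
    ((hA.continuous.pow 2).add (hB.continuous.pow 2)).continuousAt.div
      (continuousAt_pow _ _) (pow_ne_zero 3 hp')
  have hF : HasDerivAt (fun z : ℝ => - ∫ t in (1:ℝ)..z, (A t ^ 2 + B t ^ 2) / t ^ 3)
      (-g (p 2)) (p 2) :=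
    (intervalIntegral.integral_hasDerivAt_right hint hmeas hcont).neg
  have hpr : ∀ l : Fin 3, pd3 (prh A B) l p = -g (p 2) * (if l = 2 then 1 else 0) := by
    intro l
    have h := pd3_comp (fun z : ℝ => - ∫ t in (1:ℝ)..z, (A t ^ 2 + B t ^ 2) / t ^ 3) p l
      hF.differentiableAt
    rw [hF.deriv] at h
    exact h
  have dA : ∀ j : Fin 3, pd3 (fun q : E3 => A (q 2)) j p = deriv A (p 2) * (if j = 2 then 1 else 0) :=
    fun j => pd3_comp A p j hA'
  have dB : ∀ j : Fin 3, pd3 (fun q : E3 => B (q 2)) j p = deriv B (p 2) * (if j = 2 then 1 else 0) :=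
    fun j => pd3_comp B p j hB'
  have h0 : (∑ j : Fin 3, uh A B p j * pd3 (fun q => uh A B q 0) j p)
          + (∑ i : Fin 3, ∑ j : Fin 3, Γh p 0 i j * uh A B p i * uh A B p j)
        = - ∑ l : Fin 3, gup p 0 l * pd3 (prh A B) l p := by
    simp only [Fin.sum_univ_three, eA, eB, eC, hpr, Γh_closed p hp', dA, dB, pd3_const, gup, hg]
    simp [uh]
    try field_simp
    try ring
  have h1 : (∑ j : Fin 3, uh A B p j * pd3 (fun q => uh A B q 1) j p)
          + (∑ i : Fin 3, ∑ j : Fin 3, Γh p 1 i j * uh A B p i * uh A B p j)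
        = - ∑ l : Fin 3, gup p 1 l * pd3 (prh A B) l p := by
    simp only [Fin.sum_univ_three, eA, eB, eC, hpr, Γh_closed p hp', dA, dB, pd3_const, gup, hg]
    simp [uh]
    try field_simp
    try ring
  have h2 : (∑ j : Fin 3, uh A B p j * pd3 (fun q => uh A B q 2) j p)
          + (∑ i : Fin 3, ∑ j : Fin 3, Γh p 2 i j * uh A B p i * uh A B p j)
        = - ∑ l : Fin 3, gup p 2 l * pd3 (prh A B) l p := by
    simp only [Fin.sum_univ_three, eA, eB, eC, hpr, Γh_closed p hp', dA, dB, pd3_const, gup, hg]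
    simp [uh]
    try field_simp
    try ring
  constructor
  · intro k
    fin_cases k
    exacts [h0, h1, h2]
  · rw [Fin.sum_univ_three]
    have e0 : (fun q : E3 => (q 2)⁻¹ ^ 3 * uh A B q 0)
        = fun q => (fun z : ℝ => z⁻¹ ^ 3 * A z) (q 2) := by funext q; simp [uh]
    have e1 : (fun q : E3 => (q 2)⁻¹ ^ 3 * uh A B q 1)
        = fun q => (fun z : ℝ => z⁻¹ ^ 3 * B z) (q 2) := by funext q; simp [uh]
    have e2 : (fun q : E3 => (q 2)⁻¹ ^ 3 * uh A B q 2) = fun _ => (0:ℝ) := by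
      funext q; simp [uh]
    have d0 : DifferentiableAt ℝ (fun z : ℝ => z⁻¹ ^ 3 * A z) (p 2) :=
      (((differentiableAt_id (𝕜 := ℝ) (x := p 2)).inv hp').pow 3).mul hA'
    have d1 : DifferentiableAt ℝ (fun z : ℝ => z⁻¹ ^ 3 * B z) (p 2) :=
      (((differentiableAt_id (𝕜 := ℝ) (x := p 2)).inv hp').pow 3).mul hB'
    rw [e0, e1, e2, pd3_comp _ _ _ d0, pd3_comp _ _ _ d1, pd3_const]
    simp
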